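/- Let (Y,d) be a metric space, V ⊆ Y an open set, δ > 0, and for t > 0 put K_t = { y ∈ Y : dist(y, Y∖V) > t } (with the convention that the distance from a point to the empty set is +∞, so K_t = Y when V = Y). Let ū : Y → ℝ be 1-Lipschitz with |ū(y)| ≤ δ for all y ∈ V. Then there exists a 1-Lipschitz function ū₁ : Y → ℝ such that ū₁ = ū on K_{2δ}, ū₁ = 0 on Y∖K_δ, and dist(spt ū₁, Y∖V) ≥ δ, where spt ū₁ is the closure of { y : ū₁(y) ≠ 0 }. -/

import Mathlib

open MeasureTheory Set
open scoped ENNReal Topology NNReal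

noncomputable section

/-! The cutoff is `u` clamped to the band `[-ψ, ψ]` with `ψ = (dist(·, Y∖V) - δ)⁺`: the band
vanishes outside `K_δ` and is at least `δ ≥ |u|` on `K_{2δ}`, and clamping a `1`-Lipschitz
function between `1`-Lipschitz bounds keeps it `1`-Lipschitz. If `V = Y` the function `u` itself
works. -/

/-- distance between two sets, `+∞` when one is empty. -/
def eSetDist {Y : Type*} [PseudoEMetricSpace Y] (A B : Set Y) : ℝ≥0∞ :=
  ⨅ y ∈ A, ⨅ z ∈ B, edist y z

section ClampAbs

variable {Y : Type*}

def clampAbs (ψ u : Y → ℝ) (y : Y) : ℝ :=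
  max (-ψ y) (min (ψ y) (u y))

theorem clampAbs_apply_of_abs_le {ψ u : Y → ℝ} {y : Y} (h : |u y| ≤ ψ y) :
    clampAbs ψ u y = u y := by
  obtain ⟨hlo, hhi⟩ := abs_le.mp h
  rw [clampAbs, min_eq_right hhi, max_eq_right hlo]

theorem clampAbs_apply_of_eq_zero {ψ u : Y → ℝ} {y : Y} (h : ψ y = 0) : clampAbs ψ u y = 0 := by
  rw [clampAbs, h, neg_zero, max_eq_left (min_le_left _ _)]

theorem support_clampAbs_subset (ψ u : Y → ℝ) :
    Function.support (clampAbs ψ u) ⊆ Function.support ψ :=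
  fun _ hy hψ => hy (clampAbs_apply_of_eq_zero hψ)

theorem tsupport_clampAbs_subset [TopologicalSpace Y] (ψ u : Y → ℝ) :
    tsupport (clampAbs ψ u) ⊆ tsupport ψ :=
  closure_mono (support_clampAbs_subset ψ u)

theorem LipschitzWith.clampAbs [PseudoEMetricSpace Y] {K : ℝ≥0} {ψ u : Y → ℝ}
    (hψ : LipschitzWith K ψ) (hu : LipschitzWith K u) : LipschitzWith K (clampAbs ψ u) := by
  have h := hψ.neg.max (hψ.min hu)
  rwa [max_self, max_self] at h

end ClampAbs

theorem tsupport_max_sub_const_zero_subset {X : Type*} [TopologicalSpace X] {f : X → ℝ}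
    (hf : Continuous f) (c : ℝ) : tsupport (fun x => max (f x - c) 0) ⊆ {x | c ≤ f x} :=
  closure_minimal (fun _ hx => not_lt.mp fun hlt => hx (max_eq_right (sub_nonpos.mpr hlt.le)))
    (isClosed_le continuous_const hf)

theorem le_eSetDist_iff {Y : Type*} [PseudoEMetricSpace Y] {A B : Set Y} {r : ℝ≥0∞} :
    r ≤ eSetDist A B ↔ ∀ y ∈ A, r ≤ Metric.infEDist y B := by
  simp only [eSetDist, le_iInf₂_iff, Metric.le_infEDist]

section Distance

variable {Y : Type*} [PseudoMetricSpace Y] {s : Set Y}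

theorem Metric.ofReal_lt_infEDist_iff (hs : s.Nonempty) {r : ℝ} (hr : 0 ≤ r) (y : Y) :
    ENNReal.ofReal r < Metric.infEDist y s ↔ r < Metric.infDist y s :=
  ENNReal.ofReal_lt_iff_lt_toReal hr (Metric.infEDist_ne_top hs)

theorem Metric.ofReal_le_infEDist_iff (hs : s.Nonempty) (r : ℝ) (y : Y) :
    ENNReal.ofReal r ≤ Metric.infEDist y s ↔ r ≤ Metric.infDist y s :=
  ENNReal.ofReal_le_iff_le_toReal (Metric.infEDist_ne_top hs)

theorem exists_lipschitz_cutoff_of_infDist {δ : ℝ} (hδ : 0 ≤ δ) {u : Y → ℝ}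
    (hu : LipschitzWith 1 u) (hle : ∀ y ∉ s, |u y| ≤ δ) :
    ∃ u₁ : Y → ℝ, LipschitzWith 1 u₁ ∧
      (∀ y, 2 * δ < Metric.infDist y s → u₁ y = u y) ∧
      (∀ y, Metric.infDist y s ≤ δ → u₁ y = 0) ∧
      ∀ y ∈ tsupport u₁, δ ≤ Metric.infDist y s := by
  set ψ : Y → ℝ := fun y => max (Metric.infDist y s - δ) 0
  have hψ : LipschitzWith 1 ψ := by
    simpa using ((Metric.lipschitz_infDist_pt s).sub (LipschitzWith.const δ)).max_const 0
  refine ⟨clampAbs ψ u, hψ.clampAbs hu, fun y hy => ?_, fun y hy => ?_, fun y hy => ?_⟩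
  · have hys : y ∉ s := fun h => by linarith [Metric.infDist_zero_of_mem h]
    exact clampAbs_apply_of_abs_le ((hle y hys).trans (le_max_of_le_left (by linarith)))
  · exact clampAbs_apply_of_eq_zero (max_eq_right (by linarith))
  · exact tsupport_max_sub_const_zero_subset (Metric.continuous_infDist_pt s) δ
      (tsupport_clampAbs_subset ψ u hy)

end Distance

theorem lipschitz_cutoff_exists_general
    {Y : Type*} [MetricSpace Y] (V : Set Y) (δ : ℝ) (hδ : 0 < δ)
    (u : Y → ℝ) (hu : LipschitzWith 1 u) (hle : ∀ y ∈ V, |u y| ≤ δ) :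
    ∃ u₁ : Y → ℝ, LipschitzWith 1 u₁ ∧
      (∀ y, ENNReal.ofReal (2 * δ) < EMetric.infEdist y Vᶜ → u₁ y = u y) ∧
      (∀ y, ¬ ENNReal.ofReal δ < EMetric.infEdist y Vᶜ → u₁ y = 0) ∧
      ENNReal.ofReal δ ≤ eSetDist (tsupport u₁) Vᶜ := by
  rcases Vᶜ.eq_empty_or_nonempty with hV | hV
  · refine ⟨u, hu, fun _ _ => rfl, fun y hy => absurd ?_ hy, ?_⟩
    · show ENNReal.ofReal δ < Metric.infEDist y Vᶜ
      simp [hV]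
    · simp [hV, eSetDist]
  obtain ⟨u₁, hu₁, heq, hzero, hspt⟩ :=
    exists_lipschitz_cutoff_of_infDist (s := Vᶜ) hδ.le hu fun y hy =>
      hle y (notMem_compl_iff.mp hy)
  refine ⟨u₁, hu₁, fun y hy => heq y ?_, fun y hy => hzero y ?_, ?_⟩
  · exact (Metric.ofReal_lt_infEDist_iff hV (by positivity) y).mp hy
  · exact not_lt.mp fun h => hy ((Metric.ofReal_lt_infEDist_iff hV hδ.le y).mpr h)
  · exact le_eSetDist_iff.mpr fun y hy => (Metric.ofReal_le_infEDist_iff hV δ y).mpr (hspt y hy)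

/-- cutoff of a refinement. A `1`-Lipschitz `ū` with `|ū| ≤ δ` on the open
set `V` admits a `1`-Lipschitz modification `ū₁` equal to `ū` on `K_{2δ}`, vanishing outside
`K_δ`, and supported at distance at least `δ` from `Y∖V`; here
`K_t = {y : dist(y,Y∖V) > t}`. -/
theorem lipschitz_cutoff_exists
    {Y : Type*} [MetricSpace Y] (V : Set Y) (hV : IsOpen V) (δ : ℝ) (hδ : 0 < δ)
    (u : Y → ℝ) (hu : LipschitzWith 1 u) (hle : ∀ y ∈ V, |u y| ≤ δ) :
    ∃ u₁ : Y → ℝ, LipschitzWith 1 u₁ ∧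
      (∀ y, ENNReal.ofReal (2 * δ) < EMetric.infEdist y Vᶜ → u₁ y = u y) ∧
      (∀ y, ¬ ENNReal.ofReal δ < EMetric.infEdist y Vᶜ → u₁ y = 0) ∧
      ENNReal.ofReal δ ≤ eSetDist (tsupport u₁) Vᶜ :=
  lipschitz_cutoff_exists_general V δ hδ u hu hle
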